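/- arXiv:1911.11479 — 7 statements merged into one kernel-verified Lean document; each statement's English description precedes it below -/
import Mathlib

section
/- For all x ≥ 0, α > 0, β_n ≥ 1, φ, ψ ≥ 0: RL_n^{[α]}(t; x) = (1 + 2φ + 2x β_n) / (2(ψ + β_n)), where t denotes the identity function. -/
/-!
With `a = x / α` and `t = αβ / (1 + αβ)` the weights of the operator are the negative binomial
probabilities `(1 - t) ^ a * (a)ᵢ tⁱ / i!`. The binomial series `∑ (a)ᵢ tⁱ / i! = (1 - t) ^ (-a)`
shows that they have total mass `1` and, after an index shift, mean `βx`. The integral of the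
linear integrand over `[i/β, (i+1)/β]` is affine in `i`, so the operator applied to the identity
is that affine function evaluated at the mean.
-/

open intervalIntegral

open Finset

theorem ascPochhammer_eval_eq_prod_range {R : Type*} [CommSemiring R] (n : ℕ) (r : R) :
    (ascPochhammer R n).eval r = ∏ j ∈ range n, (r + j) := by
  induction n with
  | zero => simp
  | succ n ih => rw [ascPochhammer_succ_eval, ih, prod_range_succ]

theorem Ring.choose_add_sub_one_eq_prod_div_factorial {K : Type*} [Field K] [CharZero K]
    (a : K) (n : ℕ) :
    Ring.choose (a + n - 1) n = (∏ j ∈ range n, (a + j)) / n.factorial := by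
  rw [← Ring.multichoose_eq, eq_div_iff (Nat.cast_ne_zero.mpr n.factorial_ne_zero), mul_comm,
    ← nsmul_eq_mul, Ring.factorial_nsmul_multichoose_eq_ascPochhammer,
    Polynomial.ascPochhammer_smeval_eq_eval, ascPochhammer_eval_eq_prod_range]

theorem Real.hasSum_prod_add_div_factorial_mul_pow (a : ℝ) {t : ℝ} (ht : |t| < 1) :
    HasSum (fun n : ℕ ↦ (∏ j ∈ range n, (a + j)) / n.factorial * t ^ n) ((1 - t) ^ (-a)) := by
  have h := (Real.one_div_one_sub_rpow_hasFPowerSeriesOnBall_zero a).hasSum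
    (y := t) (by simpa [mem_eball_zero_iff, Real.enorm_eq_ofReal_abs] using ht)
  simp only [FormalMultilinearSeries.ofScalars_apply_eq, smul_eq_mul,
    Ring.choose_add_sub_one_eq_prod_div_factorial, zero_add] at h
  rwa [Real.rpow_neg (by linarith [le_abs_self t]), ← one_div]

theorem Real.hasSum_mul_prod_add_div_factorial_mul_pow (a : ℝ) {t : ℝ} (ht : |t| < 1) :
    HasSum (fun n : ℕ ↦ n * ((∏ j ∈ range n, (a + j)) / n.factorial * t ^ n))
      (a * t * (1 - t) ^ (-(a + 1))) := by
  rw [← hasSum_nat_add_iff' 1]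
  simp only [range_one, sum_singleton, CharP.cast_eq_zero, zero_mul, sub_zero]
  refine ((hasSum_prod_add_div_factorial_mul_pow (a + 1) ht).mul_left (a * t)).congr_fun
    fun n ↦ ?_
  rw [prod_range_succ', Nat.factorial_succ, pow_succ]
  simp only [Nat.cast_add, Nat.cast_one, Nat.cast_mul, CharP.cast_eq_zero, add_zero]
  rw [prod_congr rfl fun (j : ℕ) _ ↦ show a + ((j : ℝ) + 1) = a + 1 + j by ring]
  field_simp

theorem abs_div_one_add_lt_one {c : ℝ} (hc : 0 ≤ c) : |c / (1 + c)| < 1 := by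
  rw [abs_of_nonneg (by positivity), div_lt_one (by positivity)]
  linarith

theorem Real.one_sub_div_one_add_rpow_neg {c : ℝ} (hc : 0 ≤ c) (b : ℝ) :
    (1 - c / (1 + c)) ^ (-b) = (1 + c) ^ b := by
  have hc' : 0 < 1 + c := by linarith
  rw [show 1 - c / (1 + c) = (1 + c)⁻¹ by field_simp; ring, Real.inv_rpow hc'.le,
    Real.rpow_neg hc'.le, inv_inv]

/-- The weight of `RL_n^{[α]}`; the product is the paper's `x^{(i,-α)}`. -/
noncomputable def polyaWeight (α β x : ℝ) (i : ℕ) : ℝ :=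
  (1 + β * α) ^ (-x / α) * ((α + 1 / β) ^ i)⁻¹ *
    ((∏ j ∈ range i, (x + (j : ℝ) * α)) / (i.factorial : ℝ))

section PolyaWeight

variable {α β : ℝ}

theorem polyaWeight_eq (hα : 0 < α) (hβ : 0 < β) (x : ℝ) (i : ℕ) :
    polyaWeight α β x i = (1 + α * β) ^ (-(x / α)) *
      ((∏ j ∈ range i, (x / α + j)) / i.factorial * (α * β / (1 + α * β)) ^ i) := by
  have hprod : ∏ j ∈ range i, (x + (j : ℝ) * α) = α ^ i * ∏ j ∈ range i, (x / α + j) := by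
    calc ∏ j ∈ range i, (x + (j : ℝ) * α) = ∏ j ∈ range i, α * (x / α + j) :=
          prod_congr rfl fun j _ ↦ by field_simp
      _ = α ^ i * ∏ j ∈ range i, (x / α + j) := by rw [prod_mul_distrib, prod_const, card_range]
  have hratio : (α + 1 / β)⁻¹ * α = α * β / (1 + α * β) := by
    field_simp
    ring
  rw [polyaWeight, hprod, neg_div, mul_comm β α, ← hratio, mul_pow, inv_pow]
  ring

theorem hasSum_polyaWeight (hα : 0 < α) (hβ : 0 < β) (x : ℝ) :
    HasSum (polyaWeight α β x) 1 := by
  have hαβ : 0 ≤ α * β := by positivity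
  have h := (Real.hasSum_prod_add_div_factorial_mul_pow (x / α)
    (abs_div_one_add_lt_one hαβ)).mul_left ((1 + α * β) ^ (-(x / α)))
  rw [Real.one_sub_div_one_add_rpow_neg hαβ, ← Real.rpow_add (by positivity), neg_add_cancel,
    Real.rpow_zero] at h
  exact h.congr_fun (polyaWeight_eq hα hβ x)

theorem hasSum_mul_polyaWeight (hα : 0 < α) (hβ : 0 < β) (x : ℝ) :
    HasSum (fun i : ℕ ↦ i * polyaWeight α β x i) (β * x) := by
  have hαβ : 0 ≤ α * β := by positivity
  have h := (Real.hasSum_mul_prod_add_div_factorial_mul_pow (x / α)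
    (abs_div_one_add_lt_one hαβ)).mul_left ((1 + α * β) ^ (-(x / α)))
  have hsum : (1 + α * β) ^ (-(x / α)) *
      (x / α * (α * β / (1 + α * β)) * (1 - α * β / (1 + α * β)) ^ (-(x / α + 1))) = β * x := by
    rw [Real.one_sub_div_one_add_rpow_neg hαβ, Real.rpow_add_one (by positivity),
      Real.rpow_neg (by positivity)]
    field_simp
  rw [← hsum]
  exact h.congr_fun fun i ↦ by rw [polyaWeight_eq hα hβ]; ring

theorem hasSum_polyaWeight_mul_add (hα : 0 < α) (hβ : 0 < β) (x a b : ℝ) :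
    HasSum (fun i : ℕ ↦ polyaWeight α β x i * (a * i + b)) (a * (β * x) + b) := by
  simpa only [mul_one] using (((hasSum_mul_polyaWeight hα hβ x).mul_left a).add
    ((hasSum_polyaWeight hα hβ x).mul_left b)).congr_fun fun i ↦ by ring

end PolyaWeight

theorem integral_mul_add_div_const (β φ c A B : ℝ) :
    ∫ u in A..B, (β * u + φ) / c = (β * (B ^ 2 - A ^ 2) / 2 + φ * (B - A)) / c := by
  rw [integral_div, integral_add ((continuous_const_mul β).intervalIntegrable _ _)
    intervalIntegrable_const, integral_const_mul, integral_id, integral_const, smul_eq_mul]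
  ring

theorem integral_mul_add_div_const_div_natCast {β : ℝ} (hβ : β ≠ 0) (φ c : ℝ) (i : ℕ) :
    ∫ u in (i / β)..((i + 1) / β), (β * u + φ) / c
      = 1 / (β * c) * i + (1 + 2 * φ) / (2 * β * c) := by
  rw [integral_mul_add_div_const]
  field_simp
  ring

theorem stmt_1_general (x α β φ ψ : ℝ) (hα : 0 < α) (hβ : 1 ≤ β) :
    β * ∑' i : ℕ,
      (1 + β * α) ^ (-x / α) * ((α + 1 / β) ^ i)⁻¹ *
        ((∏ j ∈ Finset.range i, (x + (j : ℝ) * α)) / (i.factorial : ℝ)) *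
        (∫ u in ((i : ℝ) / β)..(((i : ℝ) + 1) / β), (β * u + φ) / (β + ψ))
      = (1 + 2 * φ + 2 * x * β) / (2 * (ψ + β)) := by
  have hβ₀ : 0 < β := by linarith
  show β * ∑' i : ℕ, polyaWeight α β x i * ∫ u in (i / β)..((i + 1) / β), (β * u + φ) / (β + ψ)
    = _
  simp only [integral_mul_add_div_const_div_natCast hβ₀.ne']
  rw [(hasSum_polyaWeight_mul_add hα hβ₀ x _ _).tsum_eq]
  field_simp
  ring

/-- First moment: `RL_n^{[α]}(t;x) = (1+2φ+2xβ)/(2(ψ+β))`. -/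
theorem stmt_1 (x α β φ ψ : ℝ) (hx : 0 ≤ x) (hα : 0 < α) (hβ : 1 ≤ β)
    (hφ : 0 ≤ φ) (hψ : 0 ≤ ψ) :
    β * ∑' i : ℕ,
      (1 + β * α) ^ (-x / α) * ((α + 1 / β) ^ i)⁻¹ *
        ((∏ j ∈ Finset.range i, (x + (j : ℝ) * α)) / (i.factorial : ℝ)) *
        (∫ u in ((i : ℝ) / β)..(((i : ℝ) + 1) / β), (β * u + φ) / (β + ψ))
      = (1 + 2 * φ + 2 * x * β) / (2 * (ψ + β)) :=
  stmt_1_general x α β φ ψ hα hβ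
end

section
/- Suppose α = α(n) with α = 1/β_n (its maximal value) and β_n → ∞. Then for each x ≥ 0, lim_{n→∞} β_n · Φ_{n,2}(x) = 2x, where Φ_{n,2}(x) = (1 + 3φ + 3φ² − 3xψ − 6xφψ + 3x²ψ² + 3xβ_n + 3αxβ_n²)/(3(ψ + β_n)²). -/
open Filter Topology

lemma tendsto_mul_affine_div_add_sq_atTop (c b ψ : ℝ) :
    Tendsto (fun t : ℝ => t * (c + b * t) / (ψ + t) ^ 2) atTop (𝓝 b) := by
  have hinv : Tendsto (fun t : ℝ => t⁻¹) atTop (𝓝 0) := tendsto_inv_atTop_zero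
  have hlim : Tendsto (fun t : ℝ => (c * t⁻¹ + b) / (ψ * t⁻¹ + 1) ^ 2) atTop
      (𝓝 ((c * 0 + b) / (ψ * 0 + 1) ^ 2)) :=
    ((hinv.const_mul c).add_const b).div (((hinv.const_mul ψ).add_const 1).pow 2)
      (by norm_num)
  rw [show (c * 0 + b) / (ψ * 0 + 1) ^ 2 = b by ring] at hlim
  refine hlim.congr' ?_
  filter_upwards [eventually_gt_atTop 0, eventually_gt_atTop (-ψ)] with t ht hψt
  have : ψ + t ≠ 0 := by linarith
  field_simp

theorem stmt_6_general (φ ψ : ℝ)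
    (β : ℕ → ℝ)
    (hβ : Tendsto β atTop atTop) (x : ℝ) :
    Tendsto (fun n => β n *
        ((1 + 3 * φ + 3 * φ ^ 2 - 3 * x * ψ - 6 * x * φ * ψ + 3 * x ^ 2 * ψ ^ 2
            + 3 * x * β n + 3 * (1 / β n) * x * (β n) ^ 2) / (3 * (ψ + β n) ^ 2)))
      atTop (nhds (2 * x)) := by
  set c : ℝ := 1 + 3 * φ + 3 * φ ^ 2 - 3 * x * ψ - 6 * x * φ * ψ + 3 * x ^ 2 * ψ ^ 2
  have hlim := ((tendsto_mul_affine_div_add_sq_atTop c (6 * x) ψ).comp hβ).div_const 3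
  rw [show 6 * x / 3 = 2 * x by ring] at hlim
  refine hlim.congr' ?_
  -- once `β n ≠ 0`, the term `3 (1/β) x β²` is `3 x β`, so the numerator is `c + 6 x β`
  filter_upwards [hβ.eventually_ne_atTop 0] with n hn
  simp only [Function.comp_apply]
  field_simp
  ring

/-- Limit of the scaled second central moment with `α = 1/β_n`:
`β_n · Φ_{n,2}(x) → 2x`. -/
theorem stmt_6 (φ ψ : ℝ) (hφ : 0 ≤ φ) (hψ : 0 ≤ ψ)
    (β : ℕ → ℝ) (hβ1 : ∀ n, 1 ≤ β n) (hβmono : StrictMono β)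
    (hβ : Tendsto β atTop atTop) (x : ℝ) (hx : 0 ≤ x) :
    Tendsto (fun n => β n *
        ((1 + 3 * φ + 3 * φ ^ 2 - 3 * x * ψ - 6 * x * φ * ψ + 3 * x ^ 2 * ψ ^ 2
            + 3 * x * β n + 3 * (1 / β n) * x * (β n) ^ 2) / (3 * (ψ + β n) ^ 2)))
      atTop (nhds (2 * x)) :=
  stmt_6_general φ ψ β hβ x
end

section
/- Let L be a positive linear operator on continuous functions of [0,∞) with L(1;x) = 1, and let f : [0,∞) → ℝ be bounded. Suppose the Lipschitz maximal function ϖ_j(f,x) = sup_{t ≠ x} |f(t) − f(x)|/|t − x|^j is finite for some j ∈ (0,1]. Then |L(f;x) − f(x)| ≤ ϖ_j(f,x) · (L((t−x)²; x))^{j/2}. -/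
/-- Lipschitz-maximal-function estimate for a positive linear operator `L` with
`L(1;x)=1`: `|L(f;x) - f(x)| ≤ ϖ_j(f,x) · (L((t-x)²;x))^{j/2}`. -/
theorem stmt_8 (L : (ℝ → ℝ) → ℝ → ℝ) (x : ℝ) (hx : 0 ≤ x)
    (hadd : ∀ f g : ℝ → ℝ, L (f + g) = L f + L g)
    (hsmul : ∀ (c : ℝ) (f : ℝ → ℝ), L (c • f) = c • L f)
    (hmono : ∀ f g : ℝ → ℝ, (∀ t, 0 ≤ t → f t ≤ g t) → L f x ≤ L g x)
    (hone : L (fun _ => 1) x = 1)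
    (f : ℝ → ℝ) (hfc : Continuous f) (hfb : ∃ C, ∀ t, |f t| ≤ C)
    (j : ℝ) (hj0 : 0 < j) (hj1 : j ≤ 1)
    (W : ℝ) (hW : 0 ≤ W)
    (hWmax : ∀ t : ℝ, 0 ≤ t → t ≠ x → |f t - f x| ≤ W * |t - x| ^ j) :
    |L f x - f x| ≤ W * (L (fun t => (t - x) ^ 2) x) ^ (j / 2) := by
  set A : ℝ := L (fun t => (t - x) ^ 2) x with hA
  have hj2 : 0 < j / 2 := by linarith
  have hj2' : j / 2 ≤ 1 := by linarith
  -- L of a constant c is c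
  have hconst : ∀ c : ℝ, L (fun _ => c) x = c := by
    intro c
    have hs := hsmul c (fun _ => 1)
    have h1 : (c • fun _ : ℝ => (1:ℝ)) = (fun _ : ℝ => c) := by funext t; simp
    rw [h1] at hs
    rw [hs]; simp [hone]
  have hA0 : 0 ≤ A := by
    have hm := hmono (fun _ => 0) (fun t => (t - x) ^ 2) (fun t _ => sq_nonneg _)
    rw [hconst 0] at hm; exact hm
  -- reduce to bounding L g x for g = f - f x
  set g : ℝ → ℝ := fun t => f t - f x with hg
  have hLg : L f x - f x = L g x := by
    have hfeq : f = g + (fun _ => f x) := by funext t; simp [hg]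
    have : L f x = L g x + f x := by
      conv_lhs => rw [hfeq]
      rw [hadd]; simp [hconst (f x)]
    linarith
  -- key inequality, valid for every lam > 0
  have key : ∀ lam : ℝ, 0 < lam →
      |L f x - f x| ≤ W * lam ^ (j / 2) * ((j / 2) * (A / lam) + (1 - j / 2)) := by
    intro lam hlam
    set h : ℝ → ℝ := fun t =>
      W * lam ^ (j / 2) * ((j / 2) * ((t - x) ^ 2 / lam) + (1 - j / 2)) with hh
    have hpt : ∀ t : ℝ, 0 ≤ t → |f t - f x| ≤ h t := by
      intro t ht
      rcases eq_or_ne t x with rfl | hne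
      · simp only [hh, sub_self, abs_zero]
        refine mul_nonneg (mul_nonneg hW (Real.rpow_nonneg hlam.le _))
          (add_nonneg (by positivity) (by linarith))
      · refine (hWmax t ht hne).trans ?_
        have hu : (0:ℝ) ≤ (t - x) ^ 2 / lam := by positivity
        have heq2 : ((t - x) ^ 2) ^ (j / 2) = |t - x| ^ j := by
          rw [← sq_abs, ← Real.rpow_natCast |t - x| 2, ← Real.rpow_mul (abs_nonneg _)]
          norm_num
          congr 1
          ring
        have heq : |t - x| ^ j = lam ^ (j / 2) * ((t - x) ^ 2 / lam) ^ (j / 2) := by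
          rw [Real.div_rpow (sq_nonneg _) hlam.le, heq2,
            mul_div_cancel₀ _ (ne_of_gt (Real.rpow_pos_of_pos hlam _))]
        have amgm := Real.geom_mean_le_arith_mean2_weighted
          (w₁ := j / 2) (w₂ := 1 - j / 2) (p₁ := (t - x) ^ 2 / lam) (p₂ := 1)
          hj2.le (by linarith) hu zero_le_one (by ring)
        rw [Real.one_rpow, mul_one, mul_one] at amgm
        have hub : |t - x| ^ j ≤ lam ^ (j / 2) * ((j / 2) * ((t - x) ^ 2 / lam) + (1 - j / 2)) := by
          rw [heq]
          exact mul_le_mul_of_nonneg_left amgm (Real.rpow_nonneg hlam.le _)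
        calc W * |t - x| ^ j
            ≤ W * (lam ^ (j / 2) * ((j / 2) * ((t - x) ^ 2 / lam) + (1 - j / 2))) :=
              mul_le_mul_of_nonneg_left hub hW
          _ = h t := by rw [hh]; ring
    -- compute L h x
    have hLh : L h x = W * lam ^ (j / 2) * ((j / 2) * (A / lam) + (1 - j / 2)) := by
      have hdec : h = (W * lam ^ (j / 2) * (j / 2) / lam) • (fun t : ℝ => (t - x) ^ 2)
          + (fun _ => W * lam ^ (j / 2) * (1 - j / 2)) := by
        funext t
        simp only [hh, Pi.add_apply, Pi.smul_apply, smul_eq_mul]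
        ring
      rw [hdec, hadd]
      simp only [Pi.add_apply]
      rw [hsmul, hconst]
      simp only [Pi.smul_apply, smul_eq_mul, ← hA]
      ring
    have hupper : L g x ≤ L h x := by
      refine hmono g h fun t ht => ?_
      exact (le_abs_self _).trans (hpt t ht)
    have hlower : -L h x ≤ L g x := by
      have hng : L (-g) x = -L g x := by
        have : (-g) = (-1 : ℝ) • g := by funext t; simp
        rw [this, hsmul]; simp
      have := hmono (-g) h fun t ht => (neg_le_abs (g t)).trans (hpt t ht)
      rw [hng] at this; linarith
    rw [hLg, ← hLh]
    exact abs_le.mpr ⟨by linarith, hupper⟩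
  rcases eq_or_lt_of_le hA0 with hA0' | hApos
  · -- A = 0
    rw [← hA0', Real.zero_rpow (ne_of_gt hj2), mul_zero]
    refine le_of_forall_pos_le_add fun ε hε => ?_
    set lam : ℝ := (ε / (W + 1)) ^ (2 / j) with hlamdef
    have hbase : 0 < ε / (W + 1) := by positivity
    have hlampos : 0 < lam := Real.rpow_pos_of_pos hbase _
    have hlampow : lam ^ (j / 2) = ε / (W + 1) := by
      rw [hlamdef, ← Real.rpow_mul hbase.le]
      rw [show 2 / j * (j / 2) = 1 by field_simp]
      exact Real.rpow_one _
    have hk := key lam hlampos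
    rw [← hA0'] at hk
    simp only [zero_div, mul_zero, zero_add] at hk
    rw [hlampow] at hk
    have hfin : W * (ε / (W + 1)) * (1 - j / 2) ≤ ε := by
      have h1 : W * (ε / (W + 1)) ≤ ε := by
        rw [← mul_div_assoc, div_le_iff₀ (by linarith : (0:ℝ) < W + 1)]
        nlinarith
      have h2 : W * (ε / (W + 1)) * (1 - j / 2) ≤ W * (ε / (W + 1)) := by
        nlinarith [mul_nonneg hW hbase.le]
      linarith
    linarith [hk]
  · -- A > 0
    have hk := key A hApos
    rw [div_self (ne_of_gt hApos)] at hk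
    calc |L f x - f x| ≤ W * A ^ (j / 2) * (j / 2 * 1 + (1 - j / 2)) := hk
      _ = W * A ^ (j / 2) := by ring
end

section
/- Let L be a positive linear operator on continuous functions of [0,∞) with L(1;x) = 1 and finite second central moment σ²(x) = L((t−x)²;x). If f : [0,∞) → ℝ satisfies |f(y) − f(x)| ≤ M |y−x|^j / (y + ν₁x² + ν₂x)^{j/2} for all x, y ≥ 0 (with fixed ν₁, ν₂ > 0, M > 0, j ∈ (0,1]), then for every x > 0, |L(f;x) − f(x)| ≤ M (σ²(x)/(x(ν₁x + ν₂)))^{j/2}. -/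
set_option maxHeartbeats 1000000

lemma aux_rpow_tangent (θ a s : ℝ) (hθ0 : 0 < θ) (hθ1 : θ ≤ 1) (ha : 0 ≤ a)
    (hs : 0 < s) : a ^ θ ≤ (1 - θ) * s ^ θ + θ * s ^ (θ - 1) * a := by
  have hgm := Real.geom_mean_le_arith_mean2_weighted hθ0.le (by linarith : (0:ℝ) ≤ 1 - θ)
    ha hs.le (by ring)
  have hkey : a ^ θ = (a ^ θ * s ^ (1 - θ)) * s ^ (θ - 1) := by
    rw [mul_assoc, ← Real.rpow_add hs]
    norm_num
  rw [hkey]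
  have hst : (0:ℝ) < s ^ (θ - 1) := Real.rpow_pos_of_pos hs _
  calc (a ^ θ * s ^ (1 - θ)) * s ^ (θ - 1)
      ≤ (θ * a + (1 - θ) * s) * s ^ (θ - 1) := by
        exact mul_le_mul_of_nonneg_right hgm hst.le
    _ = (1 - θ) * (s * s ^ (θ - 1)) + θ * s ^ (θ - 1) * a := by ring
    _ = (1 - θ) * s ^ θ + θ * s ^ (θ - 1) * a := by
        rw [show s * s ^ (θ - 1) = s ^ (1:ℝ) * s ^ (θ - 1) by rw [Real.rpow_one],
          ← Real.rpow_add hs]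
        norm_num

/-- Estimate in the Lipschitz-type space `Lip_M^{ν₁,ν₂}(j)` for a positive linear
operator `L` with `L(1;x)=1`. -/
theorem stmt_9 (L : (ℝ → ℝ) → ℝ → ℝ)
    (hadd : ∀ f g : ℝ → ℝ, L (f + g) = L f + L g)
    (hsmul : ∀ (c : ℝ) (f : ℝ → ℝ), L (c • f) = c • L f)
    (hmono : ∀ (x₀ : ℝ) (f g : ℝ → ℝ), (∀ t, 0 ≤ t → f t ≤ g t) → L f x₀ ≤ L g x₀)
    (hone : ∀ x₀ : ℝ, L (fun _ => 1) x₀ = 1)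
    (f : ℝ → ℝ) (hfc : Continuous f) (hfb : ∃ C, ∀ t, |f t| ≤ C)
    (M ν₁ ν₂ j : ℝ) (hM : 0 < M) (hν₁ : 0 < ν₁) (hν₂ : 0 < ν₂)
    (hj0 : 0 < j) (hj1 : j ≤ 1)
    (hLip : ∀ x y : ℝ, 0 ≤ x → 0 ≤ y →
      |f y - f x| ≤ M * |y - x| ^ j / (y + ν₁ * x ^ 2 + ν₂ * x) ^ (j / 2))
    (x : ℝ) (hx : 0 < x) :
    |L f x - f x| ≤
      M * ((L (fun t => (t - x) ^ 2) x) / (x * (ν₁ * x + ν₂))) ^ (j / 2) := by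
  set θ : ℝ := j / 2 with hθdef
  have hθ0 : 0 < θ := by positivity
  have hθ1 : θ < 1 := by rw [hθdef]; linarith
  set c : ℝ := ν₁ * x ^ 2 + ν₂ * x with hcdef
  have hc0 : 0 < c := by positivity
  have hcx : x * (ν₁ * x + ν₂) = c := by rw [hcdef]; ring
  have hcθ : (0:ℝ) < c ^ θ := Real.rpow_pos_of_pos hc0 _
  set σ : ℝ := L (fun t => (t - x) ^ 2) x with hσdef
  -- σ ≥ 0
  have hσ0 : 0 ≤ σ := by
    have h1 : L ((0:ℝ) • (fun _ => (1:ℝ))) x ≤ L (fun t => (t - x) ^ 2) x := by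
      apply hmono
      intro t ht
      simp [Pi.smul_apply]
      positivity
    rw [hsmul] at h1
    simpa using h1
  -- L f x - f x = L (f - f x) x
  have hlin : L f x - f x = L (fun t => f t - f x) x := by
    have h2 : (fun _ : ℝ => -(f x)) = (-(f x)) • (fun _ : ℝ => (1:ℝ)) := by
      funext t; simp
    have h1 : (fun t => f t - f x) = f + fun _ => -(f x) := by
      funext t; simp [Pi.add_apply]; ring
    rw [h1, h2, hadd, hsmul]
    simp [hone x]
    ring
  -- key bound for every s > 0
  have key : ∀ s : ℝ, 0 < s →
      |L f x - f x| ≤ M / c ^ θ * ((1 - θ) * s ^ θ + θ * s ^ (θ - 1) * σ) := by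
    intro s hs
    set A : ℝ := M / c ^ θ * ((1 - θ) * s ^ θ) with hAdef
    set B : ℝ := M / c ^ θ * (θ * s ^ (θ - 1)) with hBdef
    have hptwise : ∀ t : ℝ, 0 ≤ t → |f t - f x| ≤ A + B * (t - x) ^ 2 := by
      intro t ht
      have h1 : |f t - f x| ≤ M * |t - x| ^ j / (t + c) ^ θ := by
        have := hLip x t hx.le ht
        rw [hcdef]
        convert this using 3 <;> ring
      have h2 : c ^ θ ≤ (t + c) ^ θ :=
        Real.rpow_le_rpow hc0.le (by linarith) hθ0.le
      have h3 : M * |t - x| ^ j / (t + c) ^ θ ≤ M * |t - x| ^ j / c ^ θ := by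
        apply div_le_div_of_nonneg_left _ hcθ h2
        positivity
      have h4 : |t - x| ^ j = ((t - x) ^ 2) ^ θ := by
        rw [← sq_abs, ← Real.rpow_natCast |t - x| 2, ← Real.rpow_mul (abs_nonneg _)]
        norm_num [hθdef]
        ring_nf
      have h5 : ((t - x) ^ 2) ^ θ ≤ (1 - θ) * s ^ θ + θ * s ^ (θ - 1) * (t - x) ^ 2 :=
        aux_rpow_tangent θ _ s hθ0 hθ1.le (by positivity) hs
      calc |f t - f x| ≤ M * |t - x| ^ j / c ^ θ := h1.trans h3
        _ = M / c ^ θ * ((t - x) ^ 2) ^ θ := by rw [h4]; ring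
        _ ≤ M / c ^ θ * ((1 - θ) * s ^ θ + θ * s ^ (θ - 1) * (t - x) ^ 2) := by
            apply mul_le_mul_of_nonneg_left h5
            positivity
        _ = A + B * (t - x) ^ 2 := by rw [hAdef, hBdef]; ring
    -- L of the bound function
    have hLbound : L (fun t => A + B * (t - x) ^ 2) x = A + B * σ := by
      have h2 : (fun _ : ℝ => A) = A • (fun _ : ℝ => (1:ℝ)) := by
        funext t; simp
      have h3 : (fun t : ℝ => B * (t - x) ^ 2) = B • (fun t : ℝ => (t - x) ^ 2) := by
        funext t; simp
      have h1 : (fun t => A + B * (t - x) ^ 2)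
          = (fun _ : ℝ => A) + (fun t : ℝ => B * (t - x) ^ 2) := by
        funext t; simp [Pi.add_apply]
      rw [h1, h2, h3, hadd, hsmul, hsmul]
      simp [hone x, hσdef]
    rw [hlin]
    rw [abs_le]
    constructor
    · have h1 : L (fun t => -(A + B * (t - x) ^ 2)) x ≤ L (fun t => f t - f x) x := by
        apply hmono
        intro t ht
        have := hptwise t ht
        rw [abs_le] at this
        linarith [this.1]
      have h2 : (fun t : ℝ => -(A + B * (t - x) ^ 2))
          = (-1 : ℝ) • (fun t : ℝ => A + B * (t - x) ^ 2) := by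
        funext t; simp
      rw [h2, hsmul] at h1
      simp [hLbound] at h1
      have : M / c ^ θ * ((1 - θ) * s ^ θ + θ * s ^ (θ - 1) * σ) = A + B * σ := by
        rw [hAdef, hBdef]; ring
      linarith
    · have h1 : L (fun t => f t - f x) x ≤ L (fun t => A + B * (t - x) ^ 2) x := by
        apply hmono
        intro t ht
        have := hptwise t ht
        rw [abs_le] at this
        linarith [this.2]
      rw [hLbound] at h1
      have : M / c ^ θ * ((1 - θ) * s ^ θ + θ * s ^ (θ - 1) * σ) = A + B * σ := by
        rw [hAdef, hBdef]; ring
      linarith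
  rw [hcx]
  rcases eq_or_lt_of_le hσ0 with hσz | hσp
  · -- σ = 0
    rw [← hσz]
    rw [zero_div, Real.zero_rpow (ne_of_gt hθ0), mul_zero]
    apply le_of_forall_pos_le_add
    intro ε hε
    set s : ℝ := (ε * c ^ θ / (M * (1 - θ))) ^ (1 / θ) with hsdef
    have hX : 0 < ε * c ^ θ / (M * (1 - θ)) := by
      apply div_pos (by positivity)
      have : 0 < 1 - θ := by linarith
      positivity
    have hs : 0 < s := Real.rpow_pos_of_pos hX _
    have := key s hs
    rw [← hσz] at this
    have hsθ : s ^ θ = ε * c ^ θ / (M * (1 - θ)) := by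
      rw [hsdef, ← Real.rpow_mul hX.le, one_div, inv_mul_cancel₀ (ne_of_gt hθ0),
        Real.rpow_one]
    have hM' : M ≠ 0 := ne_of_gt hM
    have hc' : c ^ θ ≠ 0 := ne_of_gt hcθ
    have h1θ : (1:ℝ) - θ ≠ 0 := by linarith
    have hval : M / c ^ θ * ((1 - θ) * s ^ θ + θ * s ^ (θ - 1) * 0) = ε := by
      rw [hsθ, mul_zero, add_zero]
      field_simp
    linarith [this, hval.le, hval.ge]
  · -- σ > 0
    have := key σ hσp
    have hval : M / c ^ θ * ((1 - θ) * σ ^ θ + θ * σ ^ (θ - 1) * σ) = M * (σ / c) ^ θ := by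
      have h1 : σ ^ (θ - 1) * σ = σ ^ θ := by
        rw [show σ ^ (θ - 1) * σ = σ ^ (θ - 1) * σ ^ (1:ℝ) by rw [Real.rpow_one],
          ← Real.rpow_add hσp]
        norm_num
      rw [mul_assoc θ, h1, Real.div_rpow hσ0 hc0.le,
        show (1 - θ) * σ ^ θ + θ * σ ^ θ = σ ^ θ from by ring,
        div_mul_eq_mul_div, mul_div_assoc]
    linarith
end

section
/- With w(x) = 1 + x² as weight, the weighted norm of the first-moment error tends to zero: sup_{x≥0} |(1 + 2φ + 2xβ_n)/(2(ψ + β_n)) − x| / (1 + x²) → 0 as β_n → ∞. -/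
open Filter

/-- Weighted (weight `1+x²`) convergence of the first moment:
`sup_{x≥0} |(1+2φ+2xβ_n)/(2(ψ+β_n)) - x|/(1+x²) → 0`. -/
theorem stmt_13 (φ ψ : ℝ) (hφ : 0 ≤ φ) (hψ : 0 ≤ ψ)
    (β : ℕ → ℝ) (hβ1 : ∀ n, 1 ≤ β n) (hβ : Tendsto β atTop atTop) :
    Tendsto (fun n => ⨆ x : {x : ℝ // 0 ≤ x},
        |(1 + 2 * φ + 2 * (x : ℝ) * β n) / (2 * (ψ + β n)) - (x : ℝ)| /
          (1 + (x : ℝ) ^ 2))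
      atTop (nhds 0) := by
  have hC : Tendsto (fun n => (1 + 2*φ + ψ) / (2 * (ψ + β n))) atTop (nhds 0) := by
    apply Tendsto.div_atTop tendsto_const_nhds
    apply Tendsto.const_mul_atTop (by norm_num : (0:ℝ) < 2)
    exact tendsto_atTop_add_const_left _ _ hβ
  have key : ∀ n (x : ℝ), 0 ≤ x →
      |(1 + 2 * φ + 2 * x * β n) / (2 * (ψ + β n)) - x| / (1 + x ^ 2)
        ≤ (1 + 2*φ + ψ) / (2 * (ψ + β n)) := by
    intro n x hx
    have hb := hβ1 n
    have hD : 0 < 2 * (ψ + β n) := by linarith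
    have h1 : (1 + 2 * φ + 2 * x * β n) / (2 * (ψ + β n)) - x
        = (1 + 2*φ - 2*x*ψ) / (2 * (ψ + β n)) := by
      field_simp; ring
    rw [h1, abs_div, abs_of_pos hD, div_div]
    rw [div_le_div_iff₀ (by positivity) hD]
    have hE : (0:ℝ) ≤ ψ + β n := by linarith
    rcases abs_cases (1 + 2*φ - 2*x*ψ) with ⟨he, _⟩ | ⟨he, _⟩ <;> rw [he] <;>
      nlinarith [mul_nonneg hE (mul_nonneg hx hψ), mul_nonneg hE (sq_nonneg x),
        mul_nonneg hE (mul_nonneg hψ (sq_nonneg (x-1))), mul_nonneg hE hφ,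
        mul_nonneg (mul_nonneg hE hφ) (sq_nonneg x), mul_nonneg hE hψ]
  refine squeeze_zero (fun n => ?_) (fun n => ?_) hC
  · exact Real.iSup_nonneg fun x => by positivity
  · exact Real.iSup_le (fun x => key n x x.2)
      (div_nonneg (by linarith) (by have := hβ1 n; linarith))
end

section
/- With w(x) = 1 + x² and α = α(n) ∈ [0, 1/β_n], β_n → ∞, the weighted norm of the second-moment error tends to zero: sup_{x≥0} |(1 + 3φ + 3φ² + 6xβ_n + 6xφβ_n + 3αxβ_n² + 3x²β_n²)/(3(ψ+β_n)²) − x²| / (1 + x²) → 0 as n → ∞. -/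
open Filter

set_option maxHeartbeats 1000000 in
/-- Weighted (weight `1+x²`) convergence of the second moment. -/
theorem stmt_14 (φ ψ : ℝ) (hφ : 0 ≤ φ) (hψ : 0 ≤ ψ)
    (β : ℕ → ℝ) (hβ1 : ∀ n, 1 ≤ β n) (hβ : Tendsto β atTop atTop)
    (α : ℕ → ℝ) (hα0 : ∀ n, 0 ≤ α n) (hα1 : ∀ n, α n ≤ 1 / β n) :
    Tendsto (fun n => ⨆ x : {x : ℝ // 0 ≤ x},
        |(1 + 3 * φ + 3 * φ ^ 2 + 6 * (x : ℝ) * β n + 6 * (x : ℝ) * φ * β n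
            + 3 * α n * (x : ℝ) * (β n) ^ 2 + 3 * (x : ℝ) ^ 2 * (β n) ^ 2) /
            (3 * (ψ + β n) ^ 2) - (x : ℝ) ^ 2| / (1 + (x : ℝ) ^ 2))
      atTop (nhds 0) := by
  set K : ℝ := 6 + 6 * φ + 3 * φ ^ 2 + 3 * ψ ^ 2 + 6 * ψ with hKdef
  have hK : 0 ≤ K := by positivity
  have key : ∀ n (x : ℝ), 0 ≤ x →
      |(1 + 3 * φ + 3 * φ ^ 2 + 6 * x * β n + 6 * x * φ * β n
            + 3 * α n * x * (β n) ^ 2 + 3 * x ^ 2 * (β n) ^ 2) /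
            (3 * (ψ + β n) ^ 2) - x ^ 2| / (1 + x ^ 2) ≤ K / β n := by
    intro n x hx
    have hb : 1 ≤ β n := hβ1 n
    have hbpos : (0 : ℝ) < β n := lt_of_lt_of_le one_pos hb
    have hαb : α n * (β n) ^ 2 ≤ β n := by
      have h1 : α n * (β n) ^ 2 ≤ (1 / β n) * (β n) ^ 2 := by
        gcongr
        exact hα1 n
      calc α n * (β n) ^ 2 ≤ (1 / β n) * (β n) ^ 2 := h1
        _ = β n := by field_simp
    have hD : (0 : ℝ) < 3 * (ψ + β n) ^ 2 := by positivity
    have hrw : (1 + 3 * φ + 3 * φ ^ 2 + 6 * x * β n + 6 * x * φ * β n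
            + 3 * α n * x * (β n) ^ 2 + 3 * x ^ 2 * (β n) ^ 2) /
            (3 * (ψ + β n) ^ 2) - x ^ 2
        = (1 + 3 * φ + 3 * φ ^ 2 + (6 * β n + 6 * φ * β n + 3 * α n * (β n) ^ 2) * x
            - (3 * ψ ^ 2 + 6 * ψ * β n) * x ^ 2) / (3 * (ψ + β n) ^ 2) := by
      field_simp
      ring
    rw [hrw, abs_div, abs_of_pos hD, div_div, div_le_div_iff₀ (by positivity) hbpos]
    set b := β n with hbdef
    set a := α n with hadef
    have ha0 : 0 ≤ a := hα0 n
    have hA : (0:ℝ) ≤ 1 + 3 * φ + 3 * φ ^ 2 := by positivity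
    have hB0 : 0 ≤ 6 * b + 6 * φ * b + 3 * a * b ^ 2 := by positivity
    have hC0 : (0:ℝ) ≤ 3 * ψ ^ 2 + 6 * ψ * b := by positivity
    have hBx : 0 ≤ (6 * b + 6 * φ * b + 3 * a * b ^ 2) * x := mul_nonneg hB0 hx
    have hCx : 0 ≤ (3 * ψ ^ 2 + 6 * ψ * b) * x ^ 2 := mul_nonneg hC0 (sq_nonneg x)
    have habs : |1 + 3 * φ + 3 * φ ^ 2 + (6 * b + 6 * φ * b + 3 * a * b ^ 2) * x
            - (3 * ψ ^ 2 + 6 * ψ * b) * x ^ 2|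
        ≤ 1 + 3 * φ + 3 * φ ^ 2 + (6 * b + 6 * φ * b + 3 * a * b ^ 2) * x
            + (3 * ψ ^ 2 + 6 * ψ * b) * x ^ 2 := by
      rw [abs_le]
      constructor <;> nlinarith
    have hB' : 6 * b + 6 * φ * b + 3 * a * b ^ 2 ≤ (9 + 6 * φ) * b := by nlinarith
    have hC' : 3 * ψ ^ 2 + 6 * ψ * b ≤ (3 * ψ ^ 2 + 6 * ψ) * b := by nlinarith
    have hxx : 2 * x ≤ 1 + x ^ 2 := by nlinarith [sq_nonneg (x - 1)]
    have hx2 : x ^ 2 ≤ 1 + x ^ 2 := by linarith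
    have h1x : (1:ℝ) ≤ 1 + x ^ 2 := by nlinarith [sq_nonneg x]
    calc |1 + 3 * φ + 3 * φ ^ 2 + (6 * b + 6 * φ * b + 3 * a * b ^ 2) * x
            - (3 * ψ ^ 2 + 6 * ψ * b) * x ^ 2| * b
        ≤ (1 + 3 * φ + 3 * φ ^ 2 + (6 * b + 6 * φ * b + 3 * a * b ^ 2) * x
            + (3 * ψ ^ 2 + 6 * ψ * b) * x ^ 2) * b :=
          mul_le_mul_of_nonneg_right habs hbpos.le
      _ ≤ (1 + 3 * φ + 3 * φ ^ 2 + ((9 + 6 * φ) * b) * x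
            + ((3 * ψ ^ 2 + 6 * ψ) * b) * x ^ 2) * b := by
          have e1 : (6 * b + 6 * φ * b + 3 * a * b ^ 2) * x ≤ ((9 + 6 * φ) * b) * x :=
            mul_le_mul_of_nonneg_right hB' hx
          have e2 : (3 * ψ ^ 2 + 6 * ψ * b) * x ^ 2 ≤ ((3 * ψ ^ 2 + 6 * ψ) * b) * x ^ 2 :=
            mul_le_mul_of_nonneg_right hC' (sq_nonneg x)
          have := add_le_add (add_le_add (le_refl (1 + 3 * φ + 3 * φ ^ 2)) e1) e2
          exact mul_le_mul_of_nonneg_right this hbpos.le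
      _ = (1 + 3 * φ + 3 * φ ^ 2) * b + (9 + 6 * φ) * x * b ^ 2
            + (3 * ψ ^ 2 + 6 * ψ) * x ^ 2 * b ^ 2 := by ring
      _ ≤ (1 + 3 * φ + 3 * φ ^ 2) * ((1 + x ^ 2) * b ^ 2)
            + (9 + 6 * φ) * ((1 + x ^ 2) * b ^ 2)
            + (3 * ψ ^ 2 + 6 * ψ) * ((1 + x ^ 2) * b ^ 2) := by
          have p1 : (1 + 3 * φ + 3 * φ ^ 2) * b ≤ (1 + 3 * φ + 3 * φ ^ 2) * ((1 + x ^ 2) * b ^ 2) := by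
            apply mul_le_mul_of_nonneg_left _ hA
            nlinarith
          have p2 : (9 + 6 * φ) * x * b ^ 2 ≤ (9 + 6 * φ) * ((1 + x ^ 2) * b ^ 2) := by
            have : x * b ^ 2 ≤ (1 + x ^ 2) * b ^ 2 := by nlinarith [sq_nonneg b]
            calc (9 + 6 * φ) * x * b ^ 2 = (9 + 6 * φ) * (x * b ^ 2) := by ring
              _ ≤ (9 + 6 * φ) * ((1 + x ^ 2) * b ^ 2) := by
                  apply mul_le_mul_of_nonneg_left this (by positivity)
          have p3 : (3 * ψ ^ 2 + 6 * ψ) * x ^ 2 * b ^ 2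
              ≤ (3 * ψ ^ 2 + 6 * ψ) * ((1 + x ^ 2) * b ^ 2) := by
            have : x ^ 2 * b ^ 2 ≤ (1 + x ^ 2) * b ^ 2 := by nlinarith [sq_nonneg b]
            calc (3 * ψ ^ 2 + 6 * ψ) * x ^ 2 * b ^ 2 = (3 * ψ ^ 2 + 6 * ψ) * (x ^ 2 * b ^ 2) := by
                  ring
              _ ≤ (3 * ψ ^ 2 + 6 * ψ) * ((1 + x ^ 2) * b ^ 2) := by
                  apply mul_le_mul_of_nonneg_left this (by positivity)
          linarith
      _ = (10 + 9 * φ + 3 * φ ^ 2 + 3 * ψ ^ 2 + 6 * ψ) * ((1 + x ^ 2) * b ^ 2) := by ring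
      _ ≤ (3 * K) * ((1 + x ^ 2) * (ψ + b) ^ 2) := by
          have hc : (10 + 9 * φ + 3 * φ ^ 2 + 3 * ψ ^ 2 + 6 * ψ) ≤ 3 * K := by
            rw [hKdef]; nlinarith
          have hsq : b ^ 2 ≤ (ψ + b) ^ 2 := by nlinarith
          have hm : (1 + x ^ 2) * b ^ 2 ≤ (1 + x ^ 2) * (ψ + b) ^ 2 :=
            mul_le_mul_of_nonneg_left hsq (by positivity)
          have h3 : (0:ℝ) ≤ (1 + x ^ 2) * b ^ 2 := by positivity
          calc (10 + 9 * φ + 3 * φ ^ 2 + 3 * ψ ^ 2 + 6 * ψ) * ((1 + x ^ 2) * b ^ 2)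
              ≤ (3 * K) * ((1 + x ^ 2) * b ^ 2) := mul_le_mul_of_nonneg_right hc h3
            _ ≤ (3 * K) * ((1 + x ^ 2) * (ψ + b) ^ 2) := by
                apply mul_le_mul_of_nonneg_left hm (by positivity)
      _ = K * (3 * (ψ + b) ^ 2 * (1 + x ^ 2)) := by ring
  apply squeeze_zero (g := fun n => K / β n)
  · intro n
    apply Real.iSup_nonneg
    intro x
    positivity
  · intro n
    refine ciSup_le ?_
    rintro ⟨x, hx⟩
    exact key n x hx
  · exact Tendsto.div_atTop tendsto_const_nhds hβ
end

section
/- Let f, g be functions and L_n a sequence of positive linear operators with L_n(1;x)=1 such that for every h twice differentiable in the admissible class, β_n(L_n(h;x) − h(x) − h'(x)L_n(t−x;x) − (h''(x)/2)L_n((t−x)²;x)) → 0, L_n(h;x) → h(x), β_n L_n((t−x)²;x) → 2x, and β_n L_n(t−x;x) converges to a finite limit. Then β_n (L_n(fg;x) − L_n(f;x)·L_n(g;x)) → 2x f'(x) g'(x) as n → ∞. -/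
open Filter

/-- Grüss–Voronovskaya-type theorem: under Voronovskaya-type limits for `f`, `g`
and `fg`, `β_n (L_n(fg;x) - L_n(f;x)L_n(g;x)) → 2x f'(x) g'(x)`. -/
theorem stmt_18 (L : ℕ → (ℝ → ℝ) → ℝ → ℝ) (x : ℝ) (hx : 0 ≤ x)
    (hone : ∀ n, L n (fun _ => 1) x = 1)
    (β : ℕ → ℝ) (hβ1 : ∀ n, 1 ≤ β n) (hβ : Tendsto β atTop atTop)
    (f g : ℝ → ℝ) (a a2 b b2 : ℝ)
    -- Voronovskaya limits for f, g and fg (with (fg)'(x) = f(x)b + a g(x),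
    -- (fg)''(x) = a2 g(x) + 2ab + f(x) b2):
    (hVf : Tendsto (fun n => β n * (L n f x - f x - a * L n (fun t => t - x) x
        - a2 / 2 * L n (fun t => (t - x) ^ 2) x)) atTop (nhds 0))
    (hVg : Tendsto (fun n => β n * (L n g x - g x - b * L n (fun t => t - x) x
        - b2 / 2 * L n (fun t => (t - x) ^ 2) x)) atTop (nhds 0))
    (hVfg : Tendsto (fun n => β n * (L n (fun t => f t * g t) x - f x * g x
        - (f x * b + a * g x) * L n (fun t => t - x) x
        - (a2 * g x + 2 * a * b + f x * b2) / 2 * L n (fun t => (t - x) ^ 2) x))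
      atTop (nhds 0))
    (hLf : Tendsto (fun n => L n f x) atTop (nhds (f x)))
    (hLg : Tendsto (fun n => L n g x) atTop (nhds (g x)))
    (hM2 : Tendsto (fun n => β n * L n (fun t => (t - x) ^ 2) x) atTop (nhds (2 * x)))
    (hM1 : ∃ c : ℝ, Tendsto (fun n => β n * L n (fun t => t - x) x) atTop (nhds c)) :
    Tendsto (fun n => β n * (L n (fun t => f t * g t) x - L n f x * L n g x))
      atTop (nhds (2 * x * a * b)) := by
  obtain ⟨c, hc⟩ := hM1
  set M1 : ℕ → ℝ := fun n => L n (fun t => t - x) x with hM1def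
  set M2 : ℕ → ℝ := fun n => L n (fun t => (t - x) ^ 2) x with hM2def
  have hβne : ∀ n, β n ≠ 0 := fun n => by have := hβ1 n; linarith
  have hβinv : Tendsto (fun n => (β n)⁻¹) atTop (nhds 0) :=
    hβ.inv_tendsto_atTop
  have hM1z : Tendsto M1 atTop (nhds 0) := by
    have h := hc.mul hβinv
    rw [mul_zero] at h
    refine h.congr fun n => ?_
    rw [mul_comm (β n), mul_assoc, mul_inv_cancel₀ (hβne n), mul_one]
  have hM2z : Tendsto M2 atTop (nhds 0) := by
    have h := hM2.mul hβinv
    rw [mul_zero] at h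
    refine h.congr fun n => ?_
    rw [mul_comm (β n), mul_assoc, mul_inv_cancel₀ (hβne n), mul_one]
  set rf : ℕ → ℝ := fun n => L n f x - f x - a * M1 n - a2 / 2 * M2 n with hrf
  set rg : ℕ → ℝ := fun n => L n g x - g x - b * M1 n - b2 / 2 * M2 n with hrg
  set rfg : ℕ → ℝ := fun n => L n (fun t => f t * g t) x - f x * g x
      - (f x * b + a * g x) * M1 n
      - (a2 * g x + 2 * a * b + f x * b2) / 2 * M2 n with hrfg
  have hrgz : Tendsto rg atTop (nhds 0) := by
    have h := hVg.mul hβinv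
    rw [mul_zero] at h
    refine h.congr fun n => ?_
    rw [mul_comm (β n), mul_assoc, mul_inv_cancel₀ (hβne n), mul_one]
  -- the key algebraic decomposition
  have key : ∀ n, β n * (L n (fun t => f t * g t) x - L n f x * L n g x)
      = β n * rfg n + a * b * (β n * M2 n) - f x * (β n * rg n) - g x * (β n * rf n)
        - (a * (β n * M1 n) + a2 / 2 * (β n * M2 n) + β n * rf n)
          * (b * M1 n + b2 / 2 * M2 n + rg n) := by
    intro n
    have hLfn : L n f x = f x + a * M1 n + a2 / 2 * M2 n + rf n := by
      simp [hrf]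
    have hLgn : L n g x = g x + b * M1 n + b2 / 2 * M2 n + rg n := by
      simp [hrg]
    have hLfgn : L n (fun t => f t * g t) x = f x * g x + (f x * b + a * g x) * M1 n
        + (a2 * g x + 2 * a * b + f x * b2) / 2 * M2 n + rfg n := by
      simp [hrfg]
    rw [hLfn, hLgn, hLfgn]
    ring
  have hfinal : Tendsto (fun n => β n * rfg n + a * b * (β n * M2 n)
      - f x * (β n * rg n) - g x * (β n * rf n)
      - (a * (β n * M1 n) + a2 / 2 * (β n * M2 n) + β n * rf n)
        * (b * M1 n + b2 / 2 * M2 n + rg n)) atTop (nhds (2 * x * a * b)) := by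
    have h1 : Tendsto (fun n => a * (β n * M1 n) + a2 / 2 * (β n * M2 n) + β n * rf n)
        atTop (nhds (a * c + a2 / 2 * (2 * x) + 0)) :=
      ((hc.const_mul a).add (hM2.const_mul (a2 / 2))).add hVf
    have h2 : Tendsto (fun n => b * M1 n + b2 / 2 * M2 n + rg n)
        atTop (nhds (b * 0 + b2 / 2 * 0 + 0)) :=
      ((hM1z.const_mul b).add (hM2z.const_mul (b2 / 2))).add hrgz
    have h := (((hVfg.add (hM2.const_mul (a * b))).sub (hVg.const_mul (f x))).sub
      (hVf.const_mul (g x))).sub (h1.mul h2)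
    convert h using 2
    ring
  exact hfinal.congr fun n => (key n).symm
end
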